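/- arXiv:1210.3163 — 9 statements merged into one kernel-verified Lean document; each statement's English description precedes it below -/
import Mathlib

section
/- Let A and B be densely defined linear operators in complex Hilbert spaces H and K respectively, and assume A ⊣ B (A is quasi-similar to B) with intertwining operator T. Then B* ⊣ A* with intertwining operator T*; in particular T* : K → H is bounded, maps D(B*) into D(A*), satisfies A*T*η = T*B*η for all η ∈ D(B*), and T* is injective with densely defined inverse (T*)^{-1} = (T^{-1})*. -/
open scoped ComplexInnerProductSpace

noncomputable section

section Defs

variable {H K : Type*} [NormedAddCommGroup H] [InnerProductSpace ℂ H]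
  [NormedAddCommGroup K] [InnerProductSpace ℂ K]

/-- A bounded operator `T : H → K` is an intertwining operator for the densely defined
operators `A` (in `H`) and `B` (in `K`) if `T` maps `D(A)` into `D(B)` and
`B T ξ = T A ξ` for all `ξ ∈ D(A)`. -/
def Intertwines (T : H →L[ℂ] K) (A : H →ₗ.[ℂ] H) (B : K →ₗ.[ℂ] K) : Prop :=
  ∀ x : A.domain, ∃ hx : T (x : H) ∈ B.domain, B ⟨T (x : H), hx⟩ = T (A x)

/-- `l` belongs to the resolvent set `ρ(A)`: `A - l·I` is a bijection from `D(A)` onto `H`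
with bounded inverse. -/
def InResolvent (A : H →ₗ.[ℂ] H) (l : ℂ) : Prop :=
  (Function.Injective fun x : A.domain => A x - l • (x : H)) ∧
  (Function.Surjective fun x : A.domain => A x - l • (x : H)) ∧
  ∃ C : ℝ, ∀ x : A.domain, ‖(x : H)‖ ≤ C * ‖A x - l • (x : H)‖

/-- `l` belongs to the point spectrum `σ_p(A)`: it is an eigenvalue of `A`. -/
def InPointSpectrum (A : H →ₗ.[ℂ] H) (l : ℂ) : Prop :=
  ∃ x : A.domain, (x : H) ≠ 0 ∧ A x = l • (x : H)

/-- `l` belongs to the continuous spectrum `σ_c(A)`: `A - l·I` is injective with dense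
range, but its inverse is unbounded. -/
def InContinuousSpectrum (A : H →ₗ.[ℂ] H) (l : ℂ) : Prop :=
  (Function.Injective fun x : A.domain => A x - l • (x : H)) ∧
  DenseRange (fun x : A.domain => A x - l • (x : H)) ∧
  ¬ ∃ C : ℝ, ∀ x : A.domain, ‖(x : H)‖ ≤ C * ‖A x - l • (x : H)‖

/-- `l` belongs to the residual spectrum `σ_r(A)`: `A - l·I` is injective but its range
is not dense. -/
def InResidualSpectrum (A : H →ₗ.[ℂ] H) (l : ℂ) : Prop :=
  (Function.Injective fun x : A.domain => A x - l • (x : H)) ∧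
  ¬ DenseRange (fun x : A.domain => A x - l • (x : H))

/-- The multiplicity of `l` as an eigenvalue of `A`, i.e. `dim ker (A - l·I)`. -/
def eigMultiplicity (A : H →ₗ.[ℂ] H) (l : ℂ) : Cardinal :=
  Module.rank ℂ (LinearMap.ker (A.toFun - l • A.domain.subtype))

end Defs

/-- The inverse of an injective bounded operator `T`, as a partially defined operator
with domain the range of `T`. -/
def pmapInverse {H K : Type*} [NormedAddCommGroup H] [InnerProductSpace ℂ H]
    [NormedAddCommGroup K] [InnerProductSpace ℂ K]
    (T : H →L[ℂ] K) (hTinj : Function.Injective T) : K →ₗ.[ℂ] H where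
  domain := LinearMap.range (T : H →ₗ[ℂ] K)
  toFun := (LinearEquiv.ofInjective (T : H →ₗ[ℂ] K) hTinj).symm.toLinearMap

/-! The adjoint identity `⟪T* η, ξ⟫ = ⟪η, T ξ⟫` does all the work. For `ξ ∈ D(A)` it turns
`B T = T A` into `A* T* = T* B*` on `D(B*)`; together with `ker T* = (ran T)ᗮ` it swaps injectivity
and density of the range between `T` and `T*`; and for `ξ = T⁻¹ y` it shows that `T*` and `(T⁻¹)*`
are mutually inverse, so `D((T⁻¹)*) = ran T*`. -/

namespace ContinuousLinearMap

variable {𝕜 E F : Type*} [RCLike 𝕜] [NormedAddCommGroup E] [InnerProductSpace 𝕜 E]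
  [CompleteSpace E] [NormedAddCommGroup F] [InnerProductSpace 𝕜 F] [CompleteSpace F]

theorem injective_adjoint_iff_denseRange (T : E →L[𝕜] F) :
    Function.Injective (adjoint T) ↔ DenseRange T := by
  have hrange : Set.range T = (LinearMap.range (T : E →ₗ[𝕜] F) : Set F) :=
    (LinearMap.coe_range _).symm
  rw [DenseRange, hrange, Submodule.dense_iff_topologicalClosure_eq_top,
    Submodule.topologicalClosure_eq_top_iff, orthogonal_range, LinearMap.ker_eq_bot]
  rfl

theorem denseRange_adjoint_iff_injective (T : E →L[𝕜] F) :
    DenseRange (adjoint T) ↔ Function.Injective T := by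
  simpa using (injective_adjoint_iff_denseRange (adjoint T)).symm

end ContinuousLinearMap

open ContinuousLinearMap

section Intertwining

variable {H K : Type*} [NormedAddCommGroup H] [InnerProductSpace ℂ H] [CompleteSpace H]
  [NormedAddCommGroup K] [InnerProductSpace ℂ K] [CompleteSpace K]

theorem Intertwines.adjoint {A : H →ₗ.[ℂ] H} {B : K →ₗ.[ℂ] K} {T : H →L[ℂ] K}
    (hA : Dense (A.domain : Set H)) (hB : Dense (B.domain : Set K)) (hT : Intertwines T A B) :
    Intertwines (ContinuousLinearMap.adjoint T) B.adjoint A.adjoint := by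
  intro η
  have hinner : ∀ x : A.domain,
      ⟪ContinuousLinearMap.adjoint T (B.adjoint η), (x : H)⟫
        = ⟪ContinuousLinearMap.adjoint T (η : K), A x⟫ := by
    intro x
    obtain ⟨hx, hBx⟩ := hT x
    rw [adjoint_inner_left, adjoint_inner_left, ← hBx]
    exact LinearPMap.adjoint_isFormalAdjoint hB η ⟨T x, hx⟩
  have hmem : ContinuousLinearMap.adjoint T (η : K) ∈ A.adjoint.domain :=
    LinearPMap.mem_adjoint_domain_of_exists _ ⟨_, hinner⟩
  exact ⟨hmem, LinearPMap.adjoint_apply_eq hA ⟨_, hmem⟩ hinner⟩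

end Intertwining

section PMapInverse

variable {H K : Type*} [NormedAddCommGroup H] [InnerProductSpace ℂ H]
  [NormedAddCommGroup K] [InnerProductSpace ℂ K] {T : H →L[ℂ] K} (hT : Function.Injective T)

theorem apply_pmapInverse (y : (pmapInverse T hT).domain) : T (pmapInverse T hT y) = y :=
  LinearEquiv.ofInjective_symm_apply (h := hT) (T : H →ₗ[ℂ] K) y

theorem pmapInverse_apply_apply (x : H) : pmapInverse T hT ⟨T x, x, rfl⟩ = x :=
  hT (apply_pmapInverse hT _)

theorem dense_pmapInverse_domain (hTrg : DenseRange T) :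
    Dense ((pmapInverse T hT).domain : Set K) := by
  simpa [pmapInverse, DenseRange, LinearMap.coe_range] using hTrg

variable [CompleteSpace H] [CompleteSpace K]

theorem inner_adjoint_apply_pmapInverse (η : K) (y : (pmapInverse T hT).domain) :
    ⟪adjoint T η, pmapInverse T hT y⟫ = ⟪η, (y : K)⟫ := by
  rw [adjoint_inner_left, apply_pmapInverse]

theorem adjoint_mem_pmapInverse_adjoint_domain (η : K) :
    adjoint T η ∈ (pmapInverse T hT).adjoint.domain :=
  LinearPMap.mem_adjoint_domain_of_exists _
    ⟨η, fun y => (inner_adjoint_apply_pmapInverse hT η y).symm⟩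

theorem pmapInverse_adjoint_apply_adjoint (hTrg : DenseRange T) (η : K) :
    (pmapInverse T hT).adjoint ⟨adjoint T η, adjoint_mem_pmapInverse_adjoint_domain hT η⟩ = η :=
  LinearPMap.adjoint_apply_eq (dense_pmapInverse_domain hT hTrg) _ fun y =>
    (inner_adjoint_apply_pmapInverse hT η y).symm

theorem adjoint_apply_pmapInverse_adjoint (hTrg : DenseRange T)
    (x : (pmapInverse T hT).adjoint.domain) :
    adjoint T ((pmapInverse T hT).adjoint x) = x := by
  refine ext_inner_right ℂ fun z => ?_
  have := LinearPMap.adjoint_isFormalAdjoint (dense_pmapInverse_domain hT hTrg) x ⟨T z, z, rfl⟩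
  rwa [pmapInverse_apply_apply, ← adjoint_inner_left] at this

theorem pmapInverse_adjoint_domain (hTrg : DenseRange T) :
    (pmapInverse T hT).adjoint.domain = LinearMap.range ((adjoint T : K →L[ℂ] H) : K →ₗ[ℂ] H) := by
  apply le_antisymm
  · exact fun x hx => ⟨_, adjoint_apply_pmapInverse_adjoint hT hTrg ⟨x, hx⟩⟩
  · rintro _ ⟨η, rfl⟩
    exact adjoint_mem_pmapInverse_adjoint_domain hT η

end PMapInverse

/-- If `A ⊣ B` (quasi-similar) with intertwining operator `T` (bounded,
injective, with dense range), then `B* ⊣ A*` with intertwining operator `T*`: `T*` maps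
`D(B*)` into `D(A*)` with `A* T* η = T* B* η` on `D(B*)`, and `T*` is injective with
densely defined inverse satisfying `(T*)⁻¹ = (T⁻¹)*` (the latter expressed by:
`D((T⁻¹)*) = R(T*)` and `(T⁻¹)* (T* η) = η` for all `η`). -/
theorem statement_9 {H K : Type*} [NormedAddCommGroup H] [InnerProductSpace ℂ H]
    [CompleteSpace H] [NormedAddCommGroup K] [InnerProductSpace ℂ K] [CompleteSpace K]
    (A : H →ₗ.[ℂ] H) (B : K →ₗ.[ℂ] K)
    (hA : Dense (A.domain : Set H)) (hB : Dense (B.domain : Set K))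
    (T : H →L[ℂ] K) (hTinj : Function.Injective T) (hTrg : DenseRange T)
    (hT : Intertwines T A B) :
    Intertwines (ContinuousLinearMap.adjoint T) B.adjoint A.adjoint ∧
    Function.Injective (ContinuousLinearMap.adjoint T) ∧
    DenseRange (ContinuousLinearMap.adjoint T) ∧
    (pmapInverse T hTinj).adjoint.domain
      = LinearMap.range ((ContinuousLinearMap.adjoint T : K →L[ℂ] H) : K →ₗ[ℂ] H) ∧
    (∀ η : K, ∃ h : ContinuousLinearMap.adjoint T η ∈ (pmapInverse T hTinj).adjoint.domain,
      (pmapInverse T hTinj).adjoint ⟨ContinuousLinearMap.adjoint T η, h⟩ = η) :=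
  ⟨hT.adjoint hA hB, (injective_adjoint_iff_denseRange T).mpr hTrg,
    (denseRange_adjoint_iff_injective T).mpr hTinj, pmapInverse_adjoint_domain hTinj hTrg,
    fun η => ⟨_, pmapInverse_adjoint_apply_adjoint hTinj hTrg η⟩⟩
end
end

section
/- Let A be a densely defined linear operator in a complex Hilbert space H, B a densely defined closable operator in a complex Hilbert space K, and T : H → K a bounded injective operator with dense range. Assume the weak intertwining relation (ws): ⟨Tξ, B*η⟩ = ⟨TAξ, η⟩ for all ξ ∈ D(A) and all η ∈ D(B*). Then A is closable. -/
/-!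
The weak intertwining relation passes to the closure of the graph of `A`: if `(0, ζ)` lies in
it, then `⟪η, T ζ⟫ = ⟪B* η, T 0⟫ = 0` for every `η ∈ D(B*)`. Closability of `B` makes `D(B*)`
dense, because a vector `z ⊥ D(B*)` yields `(0, z) ∈ (graph B)ᗮᗮ = closure (graph B)`.
Hence `T ζ = 0`, and `ζ = 0` by injectivity of `T`.
-/

open scoped ComplexInnerProductSpace

noncomputable section

namespace LinearPMap

section Closable

variable {R E F : Type*} [CommRing R] [TopologicalSpace R] [AddCommGroup E] [Module R E]
  [TopologicalSpace E] [ContinuousAdd E] [ContinuousSMul R E] [AddCommGroup F] [Module R F]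
  [TopologicalSpace F] [ContinuousAdd F] [ContinuousSMul R F]

theorem isClosable_of_closure_graph {f : E →ₗ.[R] F}
    (h : ∀ x ∈ f.graph.topologicalClosure, x.1 = 0 → x.2 = 0) : f.IsClosable :=
  ⟨_, (Submodule.toLinearPMap_graph_eq _ h).symm⟩

end Closable

open scoped InnerProductSpace

variable {𝕜 E F : Type*} [RCLike 𝕜] [NormedAddCommGroup E] [InnerProductSpace 𝕜 E]
  [NormedAddCommGroup F] [InnerProductSpace 𝕜 F]

theorem snd_mem_adjoint_domain_of_mem_orthogonal_graph [CompleteSpace E] {T : E →ₗ.[𝕜] F}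
    {w : WithLp 2 (E × F)}
    (hw : w ∈ (T.graph.comap (WithLp.linearEquiv 2 𝕜 (E × F)).toLinearMap)ᗮ) :
    w.snd ∈ T.adjoint.domain := by
  refine mem_adjoint_domain_of_exists _ ⟨-w.fst, fun x => ?_⟩
  have h := (Submodule.mem_orthogonal' _ _).1 hw (WithLp.toLp 2 (x, T x)) (T.mem_graph x)
  simp only [WithLp.prod_inner_apply, WithLp.ofLp_fst, WithLp.ofLp_snd] at h
  rw [inner_neg_left]
  linear_combination -h

theorem IsClosable.dense_adjoint_domain [CompleteSpace E] [CompleteSpace F] {T : E →ₗ.[𝕜] F}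
    (hT : T.IsClosable) : Dense (T.adjoint.domain : Set F) := by
  rw [Submodule.dense_iff_topologicalClosure_eq_top, Submodule.topologicalClosure_eq_top_iff,
    Submodule.eq_bot_iff]
  intro z hz
  set G := T.graph.comap (WithLp.linearEquiv 2 𝕜 (E × F)).toLinearMap
  have hzG : WithLp.toLp 2 (0, z) ∈ Gᗮᗮ := by
    refine (Submodule.mem_orthogonal _ _).2 fun w hw => ?_
    have hwz := (Submodule.mem_orthogonal _ _).1 hz _
      (snd_mem_adjoint_domain_of_mem_orthogonal_graph hw)
    simp [WithLp.prod_inner_apply, hwz]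
  rw [Submodule.orthogonal_orthogonal_eq_closure, ← SetLike.mem_coe,
    Submodule.topologicalClosure_coe] at hzG
  have hz_graph : ((0 : E), z) ∈ T.graph.topologicalClosure :=
    (WithLp.prod_continuous_ofLp 2 E F).closure_preimage_subset _ hzG
  rw [hT.graph_closure_eq_closure_graph] at hz_graph
  exact T.closure.graph_fst_eq_zero_snd hz_graph rfl

end LinearPMap

theorem statement_10_general {H K : Type*} [NormedAddCommGroup H] [InnerProductSpace ℂ H]
    [NormedAddCommGroup K] [InnerProductSpace ℂ K] [CompleteSpace K]
    (A : H →ₗ.[ℂ] H) (B : K →ₗ.[ℂ] K)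
    (hBclosable : B.IsClosable)
    (T : H →L[ℂ] K) (hTinj : Function.Injective T)
    (hws : ∀ (ξ : A.domain) (η : B.adjoint.domain),
      ⟪B.adjoint η, T (ξ : H)⟫ = ⟪(η : K), T (A ξ)⟫) :
    A.IsClosable := by
  refine LinearPMap.isClosable_of_closure_graph fun p hp hp₁ => hTinj ?_
  rw [map_zero]
  refine hBclosable.dense_adjoint_domain.eq_zero_of_inner_right ℂ fun η hη => ?_
  have hws_closure : Set.EqOn (fun q : H × H => ⟪B.adjoint ⟨η, hη⟩, T q.1⟫)
      (fun q => ⟪η, T q.2⟫) (closure A.graph) := by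
    refine Set.EqOn.closure ?_ (by fun_prop) (by fun_prop)
    rintro ⟨_, _⟩ hq
    obtain ⟨ξ, rfl, rfl⟩ := (A.mem_graph_iff).1 hq
    exact hws ξ ⟨η, hη⟩
  simpa [hp₁] using (hws_closure hp).symm

/-- Let `A` be densely defined in `H`, `B` densely defined and closable in `K`,
and `T : H → K` bounded, injective, with dense range. If the weak intertwining relation (ws)
`⟨Tξ, B*η⟩ = ⟨TAξ, η⟩` holds for all `ξ ∈ D(A)`, `η ∈ D(B*)`, then `A` is closable. -/
theorem statement_10 {H K : Type*} [NormedAddCommGroup H] [InnerProductSpace ℂ H]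
    [NormedAddCommGroup K] [InnerProductSpace ℂ K] [CompleteSpace K]
    (A : H →ₗ.[ℂ] H) (B : K →ₗ.[ℂ] K)
    (hA : Dense (A.domain : Set H)) (hB : Dense (B.domain : Set K))
    (hBclosable : B.IsClosable)
    (T : H →L[ℂ] K) (hTinj : Function.Injective T) (hTrg : DenseRange T)
    (hws : ∀ (ξ : A.domain) (η : B.adjoint.domain),
      ⟪B.adjoint η, T (ξ : H)⟫ = ⟪(η : K), T (A ξ)⟫) :
    A.IsClosable :=
  statement_10_general A B hBclosable T hTinj hws
end
end

section
/- Let A and B be closed, densely defined linear operators in complex Hilbert spaces H and K respectively, and assume A ⊣ B. Then the residual spectra satisfy σ_r(B) ⊆ σ_r(A). -/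
open scoped ComplexInnerProductSpace

noncomputable section

/-! `T` carries `(A - λ)ξ` to `(B - λ)Tξ`. Hence `A - λ` inherits injectivity from `B - λ`
because `T` is injective, and if `R(A - λ)` were dense, its image under the continuous map `T`
with dense range would be a dense subset of `R(B - λ)`. -/

namespace Intertwines

variable {H K : Type*} [NormedAddCommGroup H] [InnerProductSpace ℂ H]
  [NormedAddCommGroup K] [InnerProductSpace ℂ K]
  {T : H →L[ℂ] K} {A : H →ₗ.[ℂ] H} {B : K →ₗ.[ℂ] K}

def mapDomain (hT : Intertwines T A B) (x : A.domain) : B.domain :=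
  ⟨T x, (hT x).1⟩

@[simp]
theorem coe_mapDomain (hT : Intertwines T A B) (x : A.domain) :
    (hT.mapDomain x : K) = T x :=
  rfl

theorem apply_mapDomain (hT : Intertwines T A B) (x : A.domain) :
    B (hT.mapDomain x) = T (A x) :=
  (hT x).2

theorem sub_smul_mapDomain (hT : Intertwines T A B) (l : ℂ) (x : A.domain) :
    B (hT.mapDomain x) - l • (hT.mapDomain x : K) = T (A x - l • (x : H)) := by
  rw [apply_mapDomain, coe_mapDomain, map_sub, map_smul]

theorem injective_sub_smul (hT : Intertwines T A B) (hTinj : Function.Injective T) {l : ℂ}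
    (hB : Function.Injective fun y : B.domain => B y - l • (y : K)) :
    Function.Injective fun x : A.domain => A x - l • (x : H) := by
  intro x y hxy
  have hmap : hT.mapDomain x = hT.mapDomain y :=
    hB <| by simp only [sub_smul_mapDomain, hxy]
  exact Subtype.ext <| hTinj <| congrArg Subtype.val hmap

theorem denseRange_sub_smul (hT : Intertwines T A B) (hTrg : DenseRange T) {l : ℂ}
    (hA : DenseRange fun x : A.domain => A x - l • (x : H)) :
    DenseRange fun y : B.domain => B y - l • (y : K) := by
  refine (hTrg.comp hA T.continuous).mono ?_
  rintro _ ⟨x, rfl⟩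
  exact ⟨hT.mapDomain x, hT.sub_smul_mapDomain l x⟩

end Intertwines

theorem statement_13_general {H K : Type*} [NormedAddCommGroup H] [InnerProductSpace ℂ H]
    [NormedAddCommGroup K] [InnerProductSpace ℂ K]
    (A : H →ₗ.[ℂ] H) (B : K →ₗ.[ℂ] K)
    (T : H →L[ℂ] K) (hTinj : Function.Injective T) (hTrg : DenseRange T)
    (hT : Intertwines T A B) :
    ∀ l : ℂ, InResidualSpectrum B l → InResidualSpectrum A l :=
  fun _ ⟨hBinj, hBnd⟩ =>
    ⟨hT.injective_sub_smul hTinj hBinj, fun hAd => hBnd (hT.denseRange_sub_smul hTrg hAd)⟩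

/-- If `A`, `B` are closed, densely defined and `A ⊣ B`, then
`σ_r(B) ⊆ σ_r(A)`. -/
theorem statement_13 {H K : Type*} [NormedAddCommGroup H] [InnerProductSpace ℂ H]
    [NormedAddCommGroup K] [InnerProductSpace ℂ K]
    (A : H →ₗ.[ℂ] H) (B : K →ₗ.[ℂ] K)
    (hA : Dense (A.domain : Set H)) (hB : Dense (B.domain : Set K))
    (hAc : A.IsClosed) (hBc : B.IsClosed)
    (T : H →L[ℂ] K) (hTinj : Function.Injective T) (hTrg : DenseRange T)
    (hT : Intertwines T A B) :
    ∀ l : ℂ, InResidualSpectrum B l → InResidualSpectrum A l :=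
  statement_13_general A B T hTinj hTrg hT
end
end

section
/- Let A and B be closed, densely defined linear operators in complex Hilbert spaces H and K respectively, and assume A ⊣ B with intertwining operator T satisfying in addition TD(A) = D(B). Then σ_p(A) = σ_p(B). -/
open scoped ComplexInnerProductSpace

noncomputable section

namespace Intertwines

variable {H K : Type*} [NormedAddCommGroup H] [InnerProductSpace ℂ H]
  [NormedAddCommGroup K] [InnerProductSpace ℂ K]
  {T : H →L[ℂ] K} {A : H →ₗ.[ℂ] H} {B : K →ₗ.[ℂ] K}

theorem inPointSpectrum_of_injective (hT : Intertwines T A B) (hTinj : Function.Injective T)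
    {l : ℂ} (hl : InPointSpectrum A l) : InPointSpectrum B l := by
  obtain ⟨x, hx0, hAx⟩ := hl
  obtain ⟨hTx, hBTx⟩ := hT x
  refine ⟨⟨T x, hTx⟩, fun h => hx0 (hTinj (by simpa using h)), ?_⟩
  rw [hBTx, hAx, map_smul]

theorem inPointSpectrum_of_domain_le_map (hT : Intertwines T A B)
    (hTinj : Function.Injective T) (hTD : B.domain ≤ Submodule.map (T : H →ₗ[ℂ] K) A.domain)
    {l : ℂ} (hl : InPointSpectrum B l) : InPointSpectrum A l := by
  obtain ⟨y, hy0, hBy⟩ := hl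
  obtain ⟨x, hxA, hxy⟩ := hTD y.2
  obtain ⟨hTx, hBTx⟩ := hT ⟨x, hxA⟩
  have hTxy : (⟨T x, hTx⟩ : B.domain) = y := Subtype.ext hxy
  refine ⟨⟨x, hxA⟩, fun hx0 => hy0 ?_, hTinj ?_⟩
  · rw [← hxy, show x = 0 from hx0, map_zero]
  · rw [← hBTx, hTxy, hBy, map_smul]
    exact congrArg (l • ·) hxy.symm

end Intertwines

theorem statement_14_general {H K : Type*} [NormedAddCommGroup H] [InnerProductSpace ℂ H]
    [NormedAddCommGroup K] [InnerProductSpace ℂ K]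
    (A : H →ₗ.[ℂ] H) (B : K →ₗ.[ℂ] K)
    (T : H →L[ℂ] K) (hTinj : Function.Injective T)
    (hT : Intertwines T A B)
    (hTD : Submodule.map (T : H →ₗ[ℂ] K) A.domain = B.domain) :
    ∀ l : ℂ, InPointSpectrum A l ↔ InPointSpectrum B l := fun _ =>
  ⟨hT.inPointSpectrum_of_injective hTinj, hT.inPointSpectrum_of_domain_le_map hTinj hTD.ge⟩

/-- If `A`, `B` are closed, densely defined and `A ⊣ B` with intertwining
operator `T` satisfying in addition `T D(A) = D(B)`, then `σ_p(A) = σ_p(B)`. -/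
theorem statement_14 {H K : Type*} [NormedAddCommGroup H] [InnerProductSpace ℂ H]
    [NormedAddCommGroup K] [InnerProductSpace ℂ K]
    (A : H →ₗ.[ℂ] H) (B : K →ₗ.[ℂ] K)
    (hA : Dense (A.domain : Set H)) (hB : Dense (B.domain : Set K))
    (hAc : A.IsClosed) (hBc : B.IsClosed)
    (T : H →L[ℂ] K) (hTinj : Function.Injective T) (hTrg : DenseRange T)
    (hT : Intertwines T A B)
    (hTD : Submodule.map (T : H →ₗ[ℂ] K) A.domain = B.domain) :
    ∀ l : ℂ, InPointSpectrum A l ↔ InPointSpectrum B l :=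
  statement_14_general A B T hTinj hT hTD
end
end

section
/- Let A and B be closed, densely defined linear operators in complex Hilbert spaces H and K respectively, and assume A ⊣ B with intertwining operator T. Suppose that T is bijective with bounded inverse T^{-1} : K → H and that TD(A) is a core for B. Then σ_p(B) ⊆ σ(A). -/
/-!
If `λ` were in `ρ(A)`, then `‖ξ‖ ≤ C ‖(A - λ)ξ‖` on `D(A)`. Conjugating by `T` gives
`‖η‖ ≤ ‖T‖ C ‖T⁻¹‖ ‖(B - λ)η‖` for `η ∈ T D(A)`, and since `T D(A)` is a core for `B` this
estimate passes to the closure of the graph, i.e. to all of `D(B)`. It forbids eigenvectors of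
`B` for `λ`.
-/

open scoped ComplexInnerProductSpace

noncomputable section

namespace LinearPMap

variable {𝕜 E : Type*} [RCLike 𝕜] [NormedAddCommGroup E] [NormedSpace 𝕜 E]

theorem norm_le_mul_norm_sub_smul_of_topologicalClosure_graph_eq {f g : E →ₗ.[𝕜] E}
    (hcore : g.graph.topologicalClosure = f.graph) (l : 𝕜) (M : ℝ)
    (hg : ∀ x : g.domain, ‖(x : E)‖ ≤ M * ‖g x - l • (x : E)‖) (x : f.domain) :
    ‖(x : E)‖ ≤ M * ‖f x - l • (x : E)‖ := by
  let bound : Set (E × E) := {p | ‖p.1‖ ≤ M * ‖p.2 - l • p.1‖}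
  have hbound_closed : _root_.IsClosed bound := isClosed_le (by fun_prop) (by fun_prop)
  have hgraph_bound : (g.graph : Set (E × E)) ⊆ bound := by
    rintro _ hp
    obtain ⟨y, rfl⟩ := (g.mem_graph_iff').1 hp
    exact hg y
  have hf_graph : ((x : E), f x) ∈ (f.graph : Set (E × E)) := f.mem_graph x
  rw [← hcore, Submodule.topologicalClosure_coe] at hf_graph
  exact closure_minimal hgraph_bound hbound_closed hf_graph

end LinearPMap

section Intertwining

variable {H K : Type*} [NormedAddCommGroup H] [InnerProductSpace ℂ H]
  [NormedAddCommGroup K] [InnerProductSpace ℂ K]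
  {T : H →L[ℂ] K} {A : H →ₗ.[ℂ] H} {B : K →ₗ.[ℂ] K}

theorem Intertwines.exists_apply_domRestrict_map (hT : Intertwines T A B)
    (y : (B.domRestrict (A.domain.map (T : H →ₗ[ℂ] K))).domain) :
    ∃ x : A.domain, (y : K) = T x ∧
      B.domRestrict (A.domain.map (T : H →ₗ[ℂ] K)) y = T (A x) := by
  obtain ⟨x, hxA, hTx⟩ := y.2.1
  obtain ⟨hTxB, hBTx⟩ := hT ⟨x, hxA⟩
  exact ⟨⟨x, hxA⟩, hTx.symm, by rw [← hBTx]; exact LinearPMap.domRestrict_apply hTx.symm⟩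

theorem Intertwines.norm_le_mul_norm_sub_smul_domRestrict_map {T : H ≃L[ℂ] K}
    (hT : Intertwines (T : H →L[ℂ] K) A B) {l : ℂ} {C : ℝ} (hC : 0 ≤ C)
    (hA : ∀ x : A.domain, ‖(x : H)‖ ≤ C * ‖A x - l • (x : H)‖)
    (y : (B.domRestrict (A.domain.map ((T : H →L[ℂ] K) : H →ₗ[ℂ] K))).domain) :
    ‖(y : K)‖ ≤ ‖(T : H →L[ℂ] K)‖ * C * ‖(T.symm : K →L[ℂ] H)‖ *
      ‖B.domRestrict (A.domain.map ((T : H →L[ℂ] K) : H →ₗ[ℂ] K)) y - l • (y : K)‖ := by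
  obtain ⟨x, hy, hBy⟩ := hT.exists_apply_domRestrict_map y
  have hshift : A x - l • (x : H) =
      T.symm (B.domRestrict (A.domain.map ((T : H →L[ℂ] K) : H →ₗ[ℂ] K)) y - l • (y : K)) := by
    rw [hBy, hy]
    simp
  calc ‖(y : K)‖ ≤ ‖(T : H →L[ℂ] K)‖ * ‖(x : H)‖ := hy ▸ (T : H →L[ℂ] K).le_opNorm x
    _ ≤ ‖(T : H →L[ℂ] K)‖ * (C * ‖A x - l • (x : H)‖) := by gcongr; exact hA x
    _ ≤ ‖(T : H →L[ℂ] K)‖ * (C * (‖(T.symm : K →L[ℂ] H)‖ *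
          ‖B.domRestrict (A.domain.map ((T : H →L[ℂ] K) : H →ₗ[ℂ] K)) y - l • (y : K)‖)) := by
        rw [hshift]
        gcongr
        exact (T.symm : K →L[ℂ] H).le_opNorm _
    _ = _ := by ring

end Intertwining

theorem statement_15_general {H K : Type*} [NormedAddCommGroup H] [InnerProductSpace ℂ H]
    [NormedAddCommGroup K] [InnerProductSpace ℂ K]
    (A : H →ₗ.[ℂ] H) (B : K →ₗ.[ℂ] K)
    (T : H ≃L[ℂ] K) (hT : Intertwines (T : H →L[ℂ] K) A B)
    (hcore : Submodule.topologicalClosure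
        ((B.domRestrict (Submodule.map ((T : H →L[ℂ] K) : H →ₗ[ℂ] K) A.domain)).graph)
      = B.graph) :
    ∀ l : ℂ, InPointSpectrum B l → ¬ InResolvent A l := by
  rintro l ⟨y, hy0, hyB⟩ ⟨-, -, C, hC⟩
  have hC' : ∀ x : A.domain, ‖(x : H)‖ ≤ max C 0 * ‖A x - l • (x : H)‖ := fun x =>
    (hC x).trans (by gcongr; exact le_max_left C 0)
  have hB := LinearPMap.norm_le_mul_norm_sub_smul_of_topologicalClosure_graph_eq hcore l _
    (hT.norm_le_mul_norm_sub_smul_domRestrict_map (le_max_right C 0) hC') y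
  rw [hyB, sub_self, norm_zero, mul_zero] at hB
  exact hy0 (norm_le_zero_iff.mp hB)

/-- If `A`, `B` are closed, densely defined and `A ⊣ B` with intertwining
operator `T` which is bijective with bounded inverse, and `T D(A)` is a core for `B`,
then `σ_p(B) ⊆ σ(A)`. -/
theorem statement_15 {H K : Type*} [NormedAddCommGroup H] [InnerProductSpace ℂ H]
    [NormedAddCommGroup K] [InnerProductSpace ℂ K]
    (A : H →ₗ.[ℂ] H) (B : K →ₗ.[ℂ] K)
    (hA : Dense (A.domain : Set H)) (hB : Dense (B.domain : Set K))
    (hAc : A.IsClosed) (hBc : B.IsClosed)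
    (T : H ≃L[ℂ] K) (hT : Intertwines (T : H →L[ℂ] K) A B)
    (hcore : Submodule.topologicalClosure
        ((B.domRestrict (Submodule.map ((T : H →L[ℂ] K) : H →ₗ[ℂ] K) A.domain)).graph)
      = B.graph) :
    ∀ l : ℂ, InPointSpectrum B l → ¬ InResolvent A l :=
  statement_15_general A B T hT hcore
end
end

section
/- Let A and B be closed, densely defined linear operators in complex Hilbert spaces H and K respectively, and assume A ⊣ B with intertwining operator T. Let λ ∈ ρ(A) and define X_λ η := T(A − λI)^{-1}T^{-1}η for η ∈ D(T^{-1}) = R(T). Then: (a.1) for every η ∈ R(T), X_λ η ∈ D(B) and (B − λI)X_λ η = η; and (a.2) if moreover (B − λI)η ∈ R(T) for every η ∈ D(B) and λ ∉ σ_p(B), then X_λ(B − λI)η = η for every η ∈ D(B). -/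
open scoped ComplexInnerProductSpace

noncomputable section

section

variable {H K : Type*} [NormedAddCommGroup H] [InnerProductSpace ℂ H]
  [NormedAddCommGroup K] [InnerProductSpace ℂ K]

theorem Intertwines.map_sub_smul {T : H →L[ℂ] K} {A : H →ₗ.[ℂ] H} {B : K →ₗ.[ℂ] K}
    (hT : Intertwines T A B) (l : ℂ) (x : A.domain) :
    ∃ hx : T (x : H) ∈ B.domain, B ⟨T (x : H), hx⟩ - l • T (x : H) = T (A x - l • (x : H)) := by
  obtain ⟨hx, hBx⟩ := hT x
  exact ⟨hx, by rw [hBx, map_sub, map_smul]⟩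

theorem eq_of_sub_smul_eq_of_not_inPointSpectrum {B : K →ₗ.[ℂ] K} {l : ℂ}
    (hl : ¬ InPointSpectrum B l) {u v : B.domain}
    (huv : B u - l • (u : K) = B v - l • (v : K)) : (u : K) = v := by
  by_contra hne
  refine hl ⟨u - v, sub_ne_zero.mpr hne, ?_⟩
  rw [LinearPMap.map_sub, Submodule.coe_sub, smul_sub]
  linear_combination (norm := abel1) huv

end

theorem statement_16_general {H K : Type*} [NormedAddCommGroup H] [InnerProductSpace ℂ H]
    [NormedAddCommGroup K] [InnerProductSpace ℂ K]
    (A : H →ₗ.[ℂ] H) (B : K →ₗ.[ℂ] K)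
    (T : H →L[ℂ] K)
    (hT : Intertwines T A B)
    (l : ℂ) :
    (∀ (ξ : H) (x : A.domain), A x - l • (x : H) = ξ →
      ∃ hx : T (x : H) ∈ B.domain, B ⟨T (x : H), hx⟩ - l • T (x : H) = T ξ) ∧
    ((∀ η : B.domain, B η - l • (η : K) ∈ Set.range T) → ¬ InPointSpectrum B l →
      ∀ (η : B.domain) (ξ : H) (x : A.domain),
        T ξ = B η - l • (η : K) → A x - l • (x : H) = ξ → T (x : H) = (η : K)) := by
  have resolvent_eq : ∀ (ξ : H) (x : A.domain), A x - l • (x : H) = ξ →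
      ∃ hx : T (x : H) ∈ B.domain, B ⟨T (x : H), hx⟩ - l • T (x : H) = T ξ := by
    rintro ξ x rfl
    exact hT.map_sub_smul l x
  refine ⟨resolvent_eq, fun _ hnp η ξ x hTξ hx => ?_⟩
  obtain ⟨hTx, hBTx⟩ := resolvent_eq ξ x hx
  exact eq_of_sub_smul_eq_of_not_inPointSpectrum (u := ⟨T x, hTx⟩) hnp (hBTx.trans hTξ)

/-- Let `A ⊣ B` with intertwining operator `T`, and `λ ∈ ρ(A)`. With
`X_λ = T (A - λI)⁻¹ T⁻¹` defined on `R(T)`: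
(a.1) `(B - λI) X_λ η = η` for every `η ∈ R(T)` (expressed via: if `ξ ∈ H` and
`x = (A - λI)⁻¹ ξ`, then `T x ∈ D(B)` and `(B - λI) T x = T ξ`); and
(a.2) if `(B - λI) η ∈ R(T)` for every `η ∈ D(B)` and `λ ∉ σ_p(B)`, then
`X_λ (B - λI) η = η` for every `η ∈ D(B)`. -/
theorem statement_16 {H K : Type*} [NormedAddCommGroup H] [InnerProductSpace ℂ H]
    [NormedAddCommGroup K] [InnerProductSpace ℂ K]
    (A : H →ₗ.[ℂ] H) (B : K →ₗ.[ℂ] K)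
    (hA : Dense (A.domain : Set H)) (hB : Dense (B.domain : Set K))
    (hAc : A.IsClosed) (hBc : B.IsClosed)
    (T : H →L[ℂ] K) (hTinj : Function.Injective T) (hTrg : DenseRange T)
    (hT : Intertwines T A B)
    (l : ℂ) (hl : InResolvent A l) :
    (∀ (ξ : H) (x : A.domain), A x - l • (x : H) = ξ →
      ∃ hx : T (x : H) ∈ B.domain, B ⟨T (x : H), hx⟩ - l • T (x : H) = T ξ) ∧
    ((∀ η : B.domain, B η - l • (η : K) ∈ Set.range T) → ¬ InPointSpectrum B l →
      ∀ (η : B.domain) (ξ : H) (x : A.domain),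
        T ξ = B η - l • (η : K) → A x - l • (x : H) = ξ → T (x : H) = (η : K)) :=
  statement_16_general A B T hT l
end
end

section
/- Let A and B be closed, densely defined linear operators in complex Hilbert spaces H and K respectively, and assume A ⊣ B with intertwining operator T. Let λ ∈ ρ(B) and define Y_λ on D(Y_λ) = {ξ ∈ H : (B − λI)^{-1}Tξ ∈ R(T)} by Y_λ ξ := T^{-1}(B − λI)^{-1}Tξ. Then: (b.1) for every ξ ∈ D(A), one has (A − λI)ξ ∈ D(Y_λ), i.e., (B − λI)^{-1}T(A − λI)ξ ∈ R(T), and Y_λ(A − λI)ξ = ξ; and (b.2) for every η ∈ D(Y_λ) with Y_λ η ∈ D(A), one has (A − λI)Y_λ η = η. -/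
open scoped ComplexInnerProductSpace

noncomputable section

/-- Let `A ⊣ B` with intertwining operator `T`, and `λ ∈ ρ(B)`. With
`Y_λ = T⁻¹ (B - λI)⁻¹ T` defined on `D(Y_λ) = {ξ : (B - λI)⁻¹ T ξ ∈ R(T)}`:
(b.1) `Y_λ (A - λI) ξ = ξ` for every `ξ ∈ D(A)` (expressed via: if `η ∈ D(B)` and
`(B - λI) η = T (A - λI) ξ`, then `η = T ξ`, so `(B - λI)⁻¹ T (A - λI) ξ ∈ R(T)` and its
`T`-preimage is `ξ`); and
(b.2) for every `η` in `D(Y_λ)` with `Y_λ η ∈ D(A)`, `(A - λI) Y_λ η = η` (expressed via: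
if `ζ ∈ D(B)`, `(B - λI) ζ = T η`, `ξ ∈ D(A)` and `T ξ = ζ`, then `(A - λI) ξ = η`). -/
theorem statement_17 {H K : Type*} [NormedAddCommGroup H] [InnerProductSpace ℂ H]
    [NormedAddCommGroup K] [InnerProductSpace ℂ K]
    (A : H →ₗ.[ℂ] H) (B : K →ₗ.[ℂ] K)
    (hA : Dense (A.domain : Set H)) (hB : Dense (B.domain : Set K))
    (hAc : A.IsClosed) (hBc : B.IsClosed)
    (T : H →L[ℂ] K) (hTinj : Function.Injective T) (hTrg : DenseRange T)
    (hT : Intertwines T A B)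
    (l : ℂ) (hl : InResolvent B l) :
    (∀ (ξ : A.domain) (η : B.domain),
      B η - l • (η : K) = T (A ξ - l • (ξ : H)) → (η : K) = T (ξ : H)) ∧
    (∀ (η : H) (ζ : B.domain) (ξ : A.domain),
      B ζ - l • (ζ : K) = T η → T (ξ : H) = (ζ : K) → A ξ - l • (ξ : H) = η) := by
  constructor
  · intro ξ η hEq
    obtain ⟨hx, hBx⟩ := hT ξ
    have key : B η - l • (η : K) = B ⟨T (ξ : H), hx⟩ - l • ((⟨T (ξ : H), hx⟩ : B.domain) : K) := by
      simp only [hBx, hEq, map_sub, map_smul]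
    have := hl.1 key
    exact congrArg Subtype.val this
  · intro η ζ ξ hEq hTξ
    obtain ⟨hx, hBx⟩ := hT ξ
    have hmem : (⟨T (ξ : H), hx⟩ : B.domain) = ζ := Subtype.ext hTξ
    apply hTinj
    rw [← hEq, ← hmem, hBx]
    simp [map_sub, map_smul]
end
end

section
/- Let A and B be closed, densely defined linear operators in complex Hilbert spaces H and K respectively, and assume A ⊣ B with intertwining operator T which is bijective with bounded inverse T^{-1} : K → H. Then ρ(A) \ σ_p(B) ⊆ ρ(B) and ρ(B) \ σ_r(A) ⊆ ρ(A). -/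
open scoped ComplexInnerProductSpace

noncomputable section

/-! `T` conjugates `A - l` into `B - l`: `(B - l) T x = T (A - l) x` on `D(A)`. If `l ∈ ρ(A)`, this
makes `B - l` onto; when it is also injective, `T` maps `D(A)` onto `D(B)` and the resolvent bound
of `A` transports to `B` at the cost of `‖T‖ ‖T⁻¹‖`. Conversely, if `l ∈ ρ(B)`, the bound transports
back, so `A - l` is injective and bounded below. If its range is dense, take `(A - l) xₙ → z`; then
`T xₙ → (B - l)⁻¹ T z`, so `xₙ` converges, and closedness of `A` places the limit in `D(A)` with
`(A - l)`-image `z`. -/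

open Filter Topology

theorem LinearPMap.IsClosed.exists_sub_smul_eq_of_tendsto {R E : Type*} [CommRing R]
    [AddCommGroup E] [Module R E] [TopologicalSpace E] [IsTopologicalAddGroup E]
    [ContinuousConstSMul R E] {A : E →ₗ.[R] E} (hA : A.IsClosed) (l : R)
    {ι : Type*} {F : Filter ι} [F.NeBot] {xs : ι → A.domain} {x z : E}
    (hx : Tendsto (fun n => (xs n : E)) F (𝓝 x))
    (hz : Tendsto (fun n => A (xs n) - l • (xs n : E)) F (𝓝 z)) :
    ∃ y : A.domain, (y : E) = x ∧ A y - l • (y : E) = z := by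
  have hAx : Tendsto (fun n => A (xs n)) F (𝓝 (z + l • x)) := by
    simpa using hz.add (hx.const_smul l)
  have hgraph : (x, z + l • x) ∈ A.graph :=
    hA.mem_of_tendsto (hx.prodMk_nhds hAx) (Eventually.of_forall fun n => A.mem_graph (xs n))
  obtain ⟨y, hyx, hAy⟩ := A.mem_graph_iff.mp hgraph
  exact ⟨y, hyx, by rw [hAy, hyx]; exact add_sub_cancel_right z _⟩

theorem LinearPMap.tendsto_of_norm_le_mul_norm_sub_smul {R E : Type*} [Ring R]
    [NormedAddCommGroup E] [Module R E] {A : E →ₗ.[R] E} {l : R} {C : ℝ}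
    (hC : ∀ x : A.domain, ‖(x : E)‖ ≤ C * ‖A x - l • (x : E)‖)
    {ι : Type*} {F : Filter ι} {xs : ι → A.domain} {u : A.domain}
    (h : Tendsto (fun n => A (xs n) - l • (xs n : E)) F (𝓝 (A u - l • (u : E)))) :
    Tendsto (fun n => (xs n : E)) F (𝓝 u) := by
  rw [tendsto_iff_norm_sub_tendsto_zero] at h ⊢
  refine squeeze_zero (fun n => norm_nonneg _) (fun n => ?_) (by simpa using h.const_mul C)
  have := hC (xs n - u)
  rwa [A.map_sub, Submodule.coe_sub, smul_sub, sub_sub_sub_comm] at this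

section Spectrum

variable {E : Type*} [NormedAddCommGroup E] [InnerProductSpace ℂ E] {A : E →ₗ.[ℂ] E} {l : ℂ}

theorem injective_sub_smul_of_not_inPointSpectrum (h : ¬ InPointSpectrum A l) :
    Function.Injective fun x : A.domain => A x - l • (x : E) := by
  intro x y hxy
  by_contra hne
  refine h ⟨x - y, sub_ne_zero.mpr (Subtype.coe_injective.ne hne), ?_⟩
  rw [A.map_sub, Submodule.coe_sub, smul_sub, sub_eq_sub_iff_sub_eq_sub]
  exact hxy

theorem InResolvent.exists_nonneg_bound (h : InResolvent A l) :
    ∃ C, 0 ≤ C ∧ ∀ x : A.domain, ‖(x : E)‖ ≤ C * ‖A x - l • (x : E)‖ := by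
  obtain ⟨-, -, C, hC⟩ := h
  exact ⟨max C 0, le_max_right C 0, fun x => (hC x).trans (by gcongr; exact le_max_left C 0)⟩

end Spectrum

namespace Intertwines

variable {H K : Type*} [NormedAddCommGroup H] [InnerProductSpace ℂ H]
  [NormedAddCommGroup K] [InnerProductSpace ℂ K] {A : H →ₗ.[ℂ] H} {B : K →ₗ.[ℂ] K} {l : ℂ}
  {T : H ≃L[ℂ] K} (hT : Intertwines (T : H →L[ℂ] K) A B)

def domainMap (x : A.domain) : B.domain :=
  ⟨T x, (hT x).fst⟩

theorem sub_smul_domainMap (x : A.domain) :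
    B (hT.domainMap x) - l • (hT.domainMap x : K) = T (A x - l • (x : H)) := by
  rw [map_sub, map_smul]
  exact congrArg (· - l • T x) (hT x).snd

include hT

theorem inResolvent_of_not_inPointSpectrum (hA : InResolvent A l)
    (hB : ¬ InPointSpectrum B l) : InResolvent B l := by
  have injB := injective_sub_smul_of_not_inPointSpectrum hB
  have preimage (v : K) : ∃ x : A.domain, B (hT.domainMap x) - l • (hT.domainMap x : K) = v := by
    obtain ⟨x, hx⟩ := hA.2.1 (T.symm v)
    exact ⟨x, (hT.sub_smul_domainMap x).trans ((congrArg T hx).trans (T.apply_symm_apply v))⟩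
  obtain ⟨C, hC0, hC⟩ := hA.exists_nonneg_bound
  refine ⟨injB, fun v => ?_, ‖(T : H →L[ℂ] K)‖ * C * ‖(T.symm : K →L[ℂ] H)‖, fun u => ?_⟩
  · obtain ⟨x, hx⟩ := preimage v
    exact ⟨hT.domainMap x, hx⟩
  · obtain ⟨x, hx⟩ := preimage (B u - l • (u : K))
    obtain rfl : hT.domainMap x = u := injB hx
    calc ‖T x‖
        ≤ ‖(T : H →L[ℂ] K)‖ * ‖(x : H)‖ := (T : H →L[ℂ] K).le_opNorm _
      _ ≤ ‖(T : H →L[ℂ] K)‖ * (C * ‖A x - l • (x : H)‖) := by gcongr; exact hC x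
      _ = ‖(T : H →L[ℂ] K)‖ * (C * ‖(T.symm : K →L[ℂ] H) (T (A x - l • (x : H)))‖) := by simp
      _ ≤ ‖(T : H →L[ℂ] K)‖ * (C * (‖(T.symm : K →L[ℂ] H)‖ * ‖T (A x - l • (x : H))‖)) := by
          gcongr; exact (T.symm : K →L[ℂ] H).le_opNorm _
      _ = _ := by rw [← hT.sub_smul_domainMap]; ring

theorem inResolvent_of_not_inResidualSpectrum (hAc : A.IsClosed) (hB : InResolvent B l)
    (hA : ¬ InResidualSpectrum A l) : InResolvent A l := by
  obtain ⟨C, hC0, hC⟩ := hB.exists_nonneg_bound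
  have injA : Function.Injective fun x : A.domain => A x - l • (x : H) := fun x y hxy => by
    have h : hT.domainMap x = hT.domainMap y := hB.1 <|
      (hT.sub_smul_domainMap x).trans ((congrArg T hxy).trans (hT.sub_smul_domainMap y).symm)
    exact Subtype.ext (T.injective (congrArg Subtype.val h))
  have dense : DenseRange fun x : A.domain => A x - l • (x : H) := by
    by_contra h
    exact hA ⟨injA, h⟩
  refine ⟨injA, fun z => ?_, ‖(T.symm : K →L[ℂ] H)‖ * C * ‖(T : H →L[ℂ] K)‖, fun x => ?_⟩
  · obtain ⟨u, hu⟩ := hB.2.1 (T z)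
    obtain ⟨ys, hys, hlim⟩ := mem_closure_iff_seq_limit.mp (dense z)
    choose xs hxs using hys
    -- the limit of `T xs` is supplied by the resolvent of `B`, so no completeness is needed
    have hTxs : Tendsto (fun n => T (xs n)) atTop (𝓝 u) :=
      LinearPMap.tendsto_of_norm_le_mul_norm_sub_smul hC (xs := fun n => hT.domainMap (xs n))
        (by simp_rw [hT.sub_smul_domainMap, hxs, hu]; exact (T.continuous.tendsto z).comp hlim)
    have hxs_lim : Tendsto (fun n => (xs n : H)) atTop (𝓝 (T.symm u)) := by
      simpa [Function.comp_def] using (T.symm.continuous.tendsto u).comp hTxs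
    obtain ⟨x, -, hx⟩ := LinearPMap.IsClosed.exists_sub_smul_eq_of_tendsto hAc l hxs_lim
      (by simpa [hxs] using hlim)
    exact ⟨x, hx⟩
  · calc ‖(x : H)‖
        = ‖(T.symm : K →L[ℂ] H) (T x)‖ := by simp
      _ ≤ ‖(T.symm : K →L[ℂ] H)‖ * ‖T x‖ := (T.symm : K →L[ℂ] H).le_opNorm _
      _ ≤ ‖(T.symm : K →L[ℂ] H)‖ * (C * ‖T (A x - l • (x : H))‖) := by
          gcongr; rw [← hT.sub_smul_domainMap]; exact hC (hT.domainMap x)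
      _ ≤ ‖(T.symm : K →L[ℂ] H)‖ * (C * (‖(T : H →L[ℂ] K)‖ * ‖A x - l • (x : H)‖)) := by
          gcongr; exact (T : H →L[ℂ] K).le_opNorm _
      _ = _ := by ring

end Intertwines

theorem statement_18_general {H K : Type*} [NormedAddCommGroup H] [InnerProductSpace ℂ H]
    [NormedAddCommGroup K] [InnerProductSpace ℂ K]
    (A : H →ₗ.[ℂ] H) (B : K →ₗ.[ℂ] K)
    (hAc : A.IsClosed)
    (T : H ≃L[ℂ] K) (hT : Intertwines (T : H →L[ℂ] K) A B) :
    (∀ l : ℂ, InResolvent A l → ¬ InPointSpectrum B l → InResolvent B l) ∧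
    (∀ l : ℂ, InResolvent B l → ¬ InResidualSpectrum A l → InResolvent A l) :=
  ⟨fun _ hA hB => hT.inResolvent_of_not_inPointSpectrum hA hB,
    fun _ hB hA => hT.inResolvent_of_not_inResidualSpectrum hAc hB hA⟩

/-- If `A`, `B` are closed, densely defined and `A ⊣ B` with intertwining
operator `T` which is bijective with bounded inverse, then `ρ(A) \ σ_p(B) ⊆ ρ(B)` and
`ρ(B) \ σ_r(A) ⊆ ρ(A)`. -/
theorem statement_18 {H K : Type*} [NormedAddCommGroup H] [InnerProductSpace ℂ H]
    [NormedAddCommGroup K] [InnerProductSpace ℂ K]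
    (A : H →ₗ.[ℂ] H) (B : K →ₗ.[ℂ] K)
    (hA : Dense (A.domain : Set H)) (hB : Dense (B.domain : Set K))
    (hAc : A.IsClosed) (hBc : B.IsClosed)
    (T : H ≃L[ℂ] K) (hT : Intertwines (T : H →L[ℂ] K) A B) :
    (∀ l : ℂ, InResolvent A l → ¬ InPointSpectrum B l → InResolvent B l) ∧
    (∀ l : ℂ, InResolvent B l → ¬ InResidualSpectrum A l → InResolvent A l) :=
  statement_18_general A B hAc T hT
end
end

section
/- Let A and B be closed, densely defined linear operators in complex Hilbert spaces H and K respectively, and assume A ⊣ B with intertwining operator T which is bijective with bounded inverse T^{-1} : K → H, and such that TD(A) is a core for B. Then σ_p(A) ⊆ σ_p(B) ⊆ σ(B) ⊆ σ(A). -/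
open scoped ComplexInnerProductSpace

noncomputable section

/-!
An eigenvector `x` of `A` is carried by `T` to an eigenvector `T x` of `B`, and an eigenvalue
obstructs injectivity of `B - l`. For the last inclusion, `T` transports a bounded inverse of
`A - l` on `D(A)` to a bound `‖y‖ ≤ ‖T‖ C ‖T⁻¹‖ ‖(B - l) y‖` on the core `T D(A)`; this bound is a
closed condition on the graph, so it extends to all of `D(B)`. Surjectivity of `B - l` comes
from that of `A - l` via `(B - l) T = T (A - l)`.
-/

section Core

variable {𝕜 E : Type*} [NormedField 𝕜] [NormedAddCommGroup E] [NormedSpace 𝕜 E]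

theorem LinearPMap.norm_le_mul_norm_sub_smul_of_core {B : E →ₗ.[𝕜] E} {D : Submodule 𝕜 E}
    (hcore : (B.domRestrict D).graph.topologicalClosure = B.graph) {C : ℝ} {l : 𝕜}
    (h : ∀ y : B.domain, (y : E) ∈ D → ‖(y : E)‖ ≤ C * ‖B y - l • (y : E)‖)
    (y : B.domain) : ‖(y : E)‖ ≤ C * ‖B y - l • (y : E)‖ := by
  let S : Set (E × E) := {p | ‖p.1‖ ≤ C * ‖p.2 - l • p.1‖}
  have hS : _root_.IsClosed S := isClosed_le (by fun_prop) (by fun_prop)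
  have hgraph : ((B.domRestrict D).graph : Set (E × E)) ⊆ S := by
    rintro ⟨_, _⟩ hp
    obtain ⟨w, rfl, rfl⟩ := (B.domRestrict D).mem_graph_iff.mp hp
    rw [B.domRestrict_apply (y := ⟨w, w.2.2⟩) rfl]
    exact h ⟨w, w.2.2⟩ w.2.1
  have hy : ((y : E), B y) ∈ _root_.closure ((B.domRestrict D).graph : Set (E × E)) := by
    rw [← Submodule.topologicalClosure_coe, hcore]
    exact B.mem_graph y
  exact closure_minimal hgraph hS hy

theorem LinearPMap.injective_sub_smul_of_norm_le {B : E →ₗ.[𝕜] E} {C : ℝ} {l : 𝕜}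
    (h : ∀ y : B.domain, ‖(y : E)‖ ≤ C * ‖B y - l • (y : E)‖) :
    Function.Injective fun y : B.domain => B y - l • (y : E) := by
  intro y₁ y₂ hy
  have hzero : B (y₁ - y₂) - l • ((y₁ - y₂ : B.domain) : E) = 0 := by
    simp only [B.map_sub, Submodule.coe_sub, smul_sub, sub_sub_sub_comm]
    exact sub_eq_zero.mpr hy
  have hnorm := h (y₁ - y₂)
  rw [hzero, norm_zero, mul_zero, norm_le_zero_iff, Submodule.coe_sub, sub_eq_zero] at hnorm
  exact Subtype.ext hnorm

end Core

section Intertwining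

variable {H K : Type*} [NormedAddCommGroup H] [InnerProductSpace ℂ H]
  [NormedAddCommGroup K] [InnerProductSpace ℂ K] {A : H →ₗ.[ℂ] H} {B : K →ₗ.[ℂ] K}

theorem Intertwines.sub_smul_apply {T : H →L[ℂ] K} (hT : Intertwines T A B) (l : ℂ) (x : A.domain)
    (hx : T x ∈ B.domain) : B ⟨T x, hx⟩ - l • T x = T (A x - l • (x : H)) := by
  obtain ⟨_, hBx⟩ := hT x
  rw [map_sub, map_smul, ← hBx]

theorem Intertwines.inPointSpectrum {T : H →L[ℂ] K} (hT : Intertwines T A B)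
    (hTinj : Function.Injective T) {l : ℂ} (hl : InPointSpectrum A l) : InPointSpectrum B l := by
  obtain ⟨x, hx0, hAx⟩ := hl
  obtain ⟨hTx, hBx⟩ := hT x
  refine ⟨⟨T x, hTx⟩, (map_ne_zero_iff T hTinj).mpr hx0, ?_⟩
  rw [hBx, hAx, map_smul]

theorem InPointSpectrum.not_inResolvent {l : ℂ} (hl : InPointSpectrum B l) :
    ¬ InResolvent B l := by
  rintro ⟨hinj, -, -⟩
  obtain ⟨y, hy0, hBy⟩ := hl
  refine hy0 (congrArg Subtype.val (hinj (a₂ := 0) ?_))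
  simp [hBy]

theorem Intertwines.norm_le_mul_norm_sub_smul {T : H ≃L[ℂ] K}
    (hT : Intertwines (T : H →L[ℂ] K) A B) {C : ℝ} {l : ℂ}
    (hC : ∀ x : A.domain, ‖(x : H)‖ ≤ C * ‖A x - l • (x : H)‖) (x : A.domain)
    (hx : T x ∈ B.domain) :
    ‖T x‖ ≤ ‖(T : H →L[ℂ] K)‖ * (max C 0 * ‖(T.symm : K →L[ℂ] H)‖) * ‖B ⟨T x, hx⟩ - l • T x‖ := by
  set v := A x - l • (x : H)
  have hBv : B ⟨T x, hx⟩ - l • T x = T v := hT.sub_smul_apply l x hx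
  have hv : ‖v‖ ≤ ‖(T.symm : K →L[ℂ] H)‖ * ‖T v‖ := by
    simpa using (T.symm : K →L[ℂ] H).le_opNorm (T v)
  rw [hBv]
  calc ‖T x‖ ≤ ‖(T : H →L[ℂ] K)‖ * ‖(x : H)‖ := (T : H →L[ℂ] K).le_opNorm x
    _ ≤ ‖(T : H →L[ℂ] K)‖ * (max C 0 * ‖v‖) := by
      gcongr
      exact (hC x).trans (by gcongr; exact le_max_left C 0)
    _ ≤ ‖(T : H →L[ℂ] K)‖ * (max C 0 * (‖(T.symm : K →L[ℂ] H)‖ * ‖T v‖)) := by gcongr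
    _ = _ := by ring

theorem InResolvent.of_intertwines {T : H ≃L[ℂ] K} (hT : Intertwines (T : H →L[ℂ] K) A B)
    (hcore : (B.domRestrict (A.domain.map ((T : H →L[ℂ] K) : H →ₗ[ℂ] K))).graph.topologicalClosure
      = B.graph)
    {l : ℂ} (hl : InResolvent A l) : InResolvent B l := by
  obtain ⟨-, hsurj, C, hC⟩ := hl
  set C' := ‖(T : H →L[ℂ] K)‖ * (max C 0 * ‖(T.symm : K →L[ℂ] H)‖)
  have hbound := B.norm_le_mul_norm_sub_smul_of_core hcore (C := C') <| by
    rintro ⟨_, hTx⟩ ⟨x, hxA, rfl⟩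
    exact hT.norm_le_mul_norm_sub_smul hC ⟨x, hxA⟩ hTx
  refine ⟨B.injective_sub_smul_of_norm_le hbound, fun z => ?_, C', hbound⟩
  obtain ⟨x, hx⟩ := hsurj (T.symm z)
  refine ⟨⟨T x, (hT x).1⟩, (hT.sub_smul_apply l x _).trans ?_⟩
  change T (A x - l • (x : H)) = z
  rw [show A x - l • (x : H) = T.symm z from hx, T.apply_symm_apply]

end Intertwining

theorem statement_19_general {H K : Type*} [NormedAddCommGroup H] [InnerProductSpace ℂ H]
    [NormedAddCommGroup K] [InnerProductSpace ℂ K]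
    (A : H →ₗ.[ℂ] H) (B : K →ₗ.[ℂ] K)
    (T : H ≃L[ℂ] K) (hT : Intertwines (T : H →L[ℂ] K) A B)
    (hcore : Submodule.topologicalClosure
        ((B.domRestrict (Submodule.map ((T : H →L[ℂ] K) : H →ₗ[ℂ] K) A.domain)).graph)
      = B.graph) :
    (∀ l : ℂ, InPointSpectrum A l → InPointSpectrum B l) ∧
    (∀ l : ℂ, InPointSpectrum B l → ¬ InResolvent B l) ∧
    (∀ l : ℂ, ¬ InResolvent B l → ¬ InResolvent A l) :=
  ⟨fun _ => hT.inPointSpectrum T.injective, fun _ => InPointSpectrum.not_inResolvent,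
    fun _ hB hA => hB (hA.of_intertwines hT hcore)⟩

/-- If `A`, `B` are closed, densely defined and `A ⊣ B` with intertwining
operator `T` which is bijective with bounded inverse, and `T D(A)` is a core for `B`, then
`σ_p(A) ⊆ σ_p(B) ⊆ σ(B) ⊆ σ(A)`. -/
theorem statement_19 {H K : Type*} [NormedAddCommGroup H] [InnerProductSpace ℂ H]
    [NormedAddCommGroup K] [InnerProductSpace ℂ K]
    (A : H →ₗ.[ℂ] H) (B : K →ₗ.[ℂ] K)
    (hA : Dense (A.domain : Set H)) (hB : Dense (B.domain : Set K))
    (hAc : A.IsClosed) (hBc : B.IsClosed)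
    (T : H ≃L[ℂ] K) (hT : Intertwines (T : H →L[ℂ] K) A B)
    (hcore : Submodule.topologicalClosure
        ((B.domRestrict (Submodule.map ((T : H →L[ℂ] K) : H →ₗ[ℂ] K) A.domain)).graph)
      = B.graph) :
    (∀ l : ℂ, InPointSpectrum A l → InPointSpectrum B l) ∧
    (∀ l : ℂ, InPointSpectrum B l → ¬ InResolvent B l) ∧
    (∀ l : ℂ, ¬ InResolvent B l → ¬ InResolvent A l) :=
  statement_19_general A B T hT hcore
end
end
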